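/- arXiv:1304.3487 — 7 statements merged into one kernel-verified Lean document; each statement's English description precedes it below -/
import Mathlib

section
/- In a semigroup S, two idempotents e and f are D-equivalent if and only if there exist x, x' ∈ S such that x*x'*x = x, x'*x*x' = x', x'*x = e, and x*x' = f. -/
/-- Green's `R` relation: `a R b` iff `a S¹ = b S¹`. -/
def GreenR {S : Type*} [Semigroup S] (a b : S) : Prop :=
  (b = a ∨ ∃ x, b = a * x) ∧ (a = b ∨ ∃ x, a = b * x)

/-- Green's `L` relation: `a L b` iff `S¹ a = S¹ b`. -/
def GreenL {S : Type*} [Semigroup S] (a b : S) : Prop :=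
  (b = a ∨ ∃ x, b = x * a) ∧ (a = b ∨ ∃ x, a = x * b)

/-! If `e R u L f`, pick `u v = e` and `w u = f`; then `x' = u` and `x = f v` are mutually
inverse with `x' x = e` and `x x' = f`. Conversely, for mutually inverse `x, x'` one has
`x' x R x' L x x'`. -/

section Green

variable {S : Type*} [Semigroup S] {e f u a b : S}

theorem GreenR.mul_eq_right (he : IsIdempotentElem e) (h : GreenR e u) : e * u = u := by
  rcases h.1 with rfl | ⟨y, rfl⟩
  · exact he
  · rw [← mul_assoc, he.eq]

theorem GreenL.mul_eq_left (hf : IsIdempotentElem f) (h : GreenL u f) : u * f = u := by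
  rcases h.2 with rfl | ⟨y, rfl⟩
  · exact hf
  · rw [mul_assoc, hf.eq]

theorem GreenR.exists_mul_eq (he : IsIdempotentElem e) (h : GreenR e u) : ∃ v, u * v = e := by
  rcases h.2 with rfl | ⟨v, hv⟩
  · exact ⟨e, he⟩
  · exact ⟨v, hv.symm⟩

theorem GreenL.exists_mul_eq (hf : IsIdempotentElem f) (h : GreenL u f) : ∃ w, w * u = f := by
  rcases h.1 with rfl | ⟨w, hw⟩
  · exact ⟨f, hf⟩
  · exact ⟨w, hw.symm⟩

theorem greenR_mul_of_mul_mul_self (h : a * b * a = a) : GreenR (a * b) a :=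
  ⟨Or.inr ⟨a, h.symm⟩, Or.inr ⟨b, rfl⟩⟩

theorem greenL_mul_of_mul_mul_self (h : a * b * a = a) : GreenL a (b * a) :=
  ⟨Or.inr ⟨b, rfl⟩, Or.inr ⟨a, by rw [← mul_assoc, h]⟩⟩

end Green

/-- Two idempotents `e`, `f` of a semigroup are `D`-equivalent iff there are
`x, x'` with `x x' x = x`, `x' x x' = x'`, `x' x = e` and `x x' = f`. -/
theorem stmt2 {S : Type*} [Semigroup S] (e f : S) (he : e * e = e) (hf : f * f = f) :
    (∃ u : S, GreenR e u ∧ GreenL u f) ↔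
      ∃ x x' : S, x * x' * x = x ∧ x' * x * x' = x' ∧ x' * x = e ∧ x * x' = f := by
  constructor
  · rintro ⟨u, heu, huf⟩
    obtain ⟨v, huv⟩ := heu.exists_mul_eq he
    obtain ⟨w, hwu⟩ := huf.exists_mul_eq hf
    have hux : u * (f * v) = e := by rw [← mul_assoc, huf.mul_eq_left hf, huv]
    have hxu : f * v * u = f := by
      rw [← hwu, mul_assoc w, mul_assoc, huv, heu.mul_eq_right he]
    refine ⟨f * v, u, ?_, ?_, hux, hxu⟩
    · rw [hxu, ← mul_assoc, hf]
    · rw [hux, heu.mul_eq_right he]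
  · rintro ⟨x, x', -, hx'xx', rfl, rfl⟩
    exact ⟨x', greenR_mul_of_mul_mul_self hx'xx', greenL_mul_of_mul_mul_self hx'xx'⟩
end

section
/- Two idempotents e and f of a semigroup S are isomorphic as objects of the Karoubi envelope K(S) if and only if e and f are D-equivalent in S. -/
open CategoryTheory

lemma left_absorb {S : Type*} [Semigroup S] {Y s X : S}
    (hY : Y * Y = Y) (h : Y * s * X = s) : Y * s = s := by
  conv_lhs => rw [← h]
  rw [← mul_assoc Y (Y * s) X, ← mul_assoc Y Y s, hY]
  exact h

lemma right_absorb {S : Type*} [Semigroup S] {Y s X : S}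
    (hX : X * X = X) (h : Y * s * X = s) : s * X = s := by
  conv_lhs => rw [← h]
  rw [mul_assoc (Y * s) X X, hX]
  exact h

/-- The objects of the Karoubi envelope of a semigroup `S`: the idempotents of `S`. -/
def KIdem (S : Type*) [Semigroup S] := {e : S // e * e = e}

/-- The Karoubi envelope of `S`: a morphism `f ⟶ e` is an element `s ∈ eSf`;
composition `(e,s,f) ∘ (f,t,g) = (e, s*t, g)`. -/
instance KaroubiCat (S : Type*) [Semigroup S] : Category (KIdem S) where
  Hom X Y := {s : S // Y.1 * s * X.1 = s}
  id X := ⟨X.1, by rw [X.2, X.2]⟩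
  comp {X Y Z} m n := ⟨n.1 * m.1, by
    rw [← mul_assoc Z.1 n.1 m.1, left_absorb Z.2 n.2, mul_assoc n.1 m.1 X.1,
      right_absorb X.2 m.2]⟩
  id_comp := by
    intro X Y m
    exact Subtype.ext (right_absorb X.2 m.2)
  comp_id := by
    intro X Y m
    exact Subtype.ext (left_absorb Y.2 m.2)
  assoc := by
    intro W X Y Z f g h
    exact Subtype.ext (mul_assoc h.1 g.1 f.1).symm

namespace KIdem

variable {S : Type*} [Semigroup S] {e f : KIdem S}

lemma comp_val {X Y Z : KIdem S} (m : X ⟶ Y) (n : Y ⟶ Z) : (m ≫ n).1 = n.1 * m.1 := rfl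

lemma id_val (X : KIdem S) : (𝟙 X : X ⟶ X).1 = X.1 := rfl

lemma inv_val_mul_hom_val (i : e ≅ f) : i.inv.1 * i.hom.1 = e.1 := by
  rw [← comp_val, i.hom_inv_id, id_val]

lemma hom_val_mul_inv_val (i : e ≅ f) : i.hom.1 * i.inv.1 = f.1 := by
  rw [← comp_val, i.inv_hom_id, id_val]

def isoOfMutualInverses (x x' : S) (hx : x * x' * x = x) (hx' : x' * x * x' = x')
    (he : x' * x = e.1) (hf : x * x' = f.1) : e ≅ f where
  hom := ⟨x, by rw [← hf, hx, ← he, ← mul_assoc, hx]⟩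
  inv := ⟨x', by rw [← he, hx', ← hf, ← mul_assoc, hx']⟩
  hom_inv_id := Subtype.ext he
  inv_hom_id := Subtype.ext hf

end KIdem

/-- Two idempotents are isomorphic in the Karoubi envelope `K(S)` iff they are
`D`-equivalent in `S` (in the sense of von Neumann inverses). -/
theorem stmt3 {S : Type*} [Semigroup S] (e f : KIdem S) :
    Nonempty (e ≅ f) ↔
      ∃ x x' : S, x * x' * x = x ∧ x' * x * x' = x' ∧ x' * x = e.1 ∧ x * x' = f.1 := by
  constructor
  · rintro ⟨i⟩
    refine ⟨i.hom.1, i.inv.1, ?_, ?_, KIdem.inv_val_mul_hom_val i, KIdem.hom_val_mul_inv_val i⟩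
    · rw [KIdem.hom_val_mul_inv_val, left_absorb f.2 i.hom.2]
    · rw [KIdem.inv_val_mul_hom_val, left_absorb e.2 i.inv.2]
  · rintro ⟨x, x', hx, hx', he, hf⟩
    exact ⟨KIdem.isoOfMutualInverses x x' hx hx' he hf⟩
end

section
/- Let X be a synchronizing shift and u a synchronizing word of L(X). Then there exists a nonzero idempotent e of the syntactic semigroup S(X) such that R_X(u) = R_X(1)·e, i.e., there is a synchronizing word w with [w] idempotent, [w] ≠ 0, and R_X(u) = R_X(w). -/
/-- `u` is a synchronizing word of the language `L`. -/
def Synchro {A : Type*} (L : Set (List A)) (u : List A) : Prop :=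
  u ∈ L ∧ ∀ v w : List A, v ++ u ∈ L → u ++ w ∈ L → v ++ u ++ w ∈ L

/-- For a synchronizing shift `X` (irreducible, with a synchronizing word) and a
synchronizing word `u`, there is a nonzero idempotent `e = [w]` of the syntactic
semigroup, with `w` synchronizing, such that `R_X(u) = R_X(1)·e = R_X(w)`. -/
theorem stmt9 {A : Type*} (L : Set (List A))
    (hnil : ([] : List A) ∉ L)
    (hfac : ∀ u v : List A, u ∈ L → v ≠ [] → v <:+: u → v ∈ L)
    (hpro : ∀ u ∈ L, ∃ a b : A, (a :: u) ∈ L ∧ u ++ [b] ∈ L)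
    (hirr : ∀ u ∈ L, ∀ v ∈ L, ∃ w : List A, u ++ w ++ v ∈ L)
    (u : List A) (hu : Synchro L u) :
    ∃ w : List A, Synchro L w ∧ w ∈ L ∧
      (∀ x y : List A, x ++ w ++ y ∈ L ↔ x ++ (w ++ w) ++ y ∈ L) ∧
      {z : List A | u ++ z ∈ L} = {z : List A | w ++ z ∈ L} := by
  obtain ⟨huL, hsync⟩ := hu
  have hune : u ≠ [] := by rintro rfl; exact hnil huL
  obtain ⟨t, ht⟩ := hirr u huL u huL
  -- general extraction lemma: any factor ending in `u` (or starting with `u`)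
  have hne : ∀ s : List A, s ++ u ≠ [] := fun s h => hune (List.append_eq_nil_iff.mp h).2
  have hne' : ∀ s : List A, u ++ s ≠ [] := fun s h => hune (List.append_eq_nil_iff.mp h).1
  -- `t ++ u ∈ L` : it is a suffix of `u ++ t ++ u`
  have hwL : t ++ u ∈ L := by
    refine hfac _ _ ht (hne t) ?_
    have : (t ++ u) <:+ (u ++ t ++ u) := by
      rw [List.append_assoc]; exact List.suffix_append u (t ++ u)
    exact this.isInfix
  -- suffix extraction: if `a ++ (u ++ s) ∈ L` then `u ++ s ∈ L`
  have hsuf : ∀ a s : List A, a ++ (u ++ s) ∈ L → u ++ s ∈ L := by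
    intro a s h
    exact hfac _ _ h (hne' s) (List.suffix_append a (u ++ s)).isInfix
  -- prefix extraction: if `(s ++ u) ++ a ∈ L` then `s ++ u ∈ L`
  have hpre : ∀ a s : List A, (s ++ u) ++ a ∈ L → s ++ u ∈ L := by
    intro a s h
    exact hfac _ _ h (hne s) (List.prefix_append (s ++ u) a).isInfix
  refine ⟨t ++ u, ⟨hwL, ?_⟩, hwL, ?_, ?_⟩
  · -- t ++ u is synchronizing
    intro v y hv hy
    have h1 : (v ++ t) ++ u ∈ L := by simpa [List.append_assoc] using hv
    have h2 : u ++ y ∈ L := hsuf t y (by simpa [List.append_assoc] using hy)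
    have := hsync (v ++ t) y h1 h2
    simpa [List.append_assoc] using this
  · -- idempotence
    intro x y
    constructor
    · intro h
      have h1 : (x ++ t) ++ u ∈ L :=
        hpre y (x ++ t) (by simpa [List.append_assoc] using h)
      have h2 : u ++ (t ++ u) ∈ L := by simpa [List.append_assoc] using ht
      have h3 := hsync (x ++ t) (t ++ u) h1 h2
      -- h3 : (x ++ t) ++ u ++ (t ++ u) ∈ L
      have h4 : (x ++ t ++ u ++ t) ++ u ∈ L := by simpa [List.append_assoc] using h3
      have h5 : u ++ y ∈ L := hsuf (x ++ t) y (by simpa [List.append_assoc] using h)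
      have := hsync (x ++ t ++ u ++ t) y h4 h5
      simpa [List.append_assoc] using this
    · intro h
      have h1 : (x ++ t) ++ u ∈ L :=
        hpre (t ++ u ++ y) (x ++ t) (by simpa [List.append_assoc] using h)
      have h2 : u ++ y ∈ L := hsuf (x ++ t ++ u ++ t) y (by simpa [List.append_assoc] using h)
      have := hsync (x ++ t) y h1 h2
      simpa [List.append_assoc] using this
  · -- equality of right contexts
    ext z
    simp only [Set.mem_setOf_eq]
    constructor
    · intro h
      have := hsync t z hwL h
      simpa [List.append_assoc] using this
    · intro h
      exact hsuf t z (by simpa [List.append_assoc] using h)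
end

section
/- Let X ⊆ A^ℤ be a shift and u, v ∈ A⁺. Then [u] ⊆ [v] (inclusion of two-sided contexts in L(X)) if and only if for every left-infinite sequence x ∈ A^{ℤ⁻}, C_X(xu) ⊆ C_X(xv), where C_X(x) = {y ∈ A^ℕ : x.y ∈ X}. -/
/-- The language of finite blocks of a subset `X ⊆ A^ℤ`. -/
def langOf {A : Type*} (X : Set (ℤ → A)) : Set (List A) :=
  {u | u ≠ [] ∧ ∃ z ∈ X, ∃ i : ℤ, u = (List.range u.length).map fun k => z (i + (k : ℤ))}

/-- The bi-infinite sequence `x.y` obtained from a left-infinite sequence `x`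
(indexed so that `x n` is the symbol at position `-(n+1)`) and a right-infinite
sequence `y`. -/
def combine {A : Type*} (x y : ℕ → A) : ℤ → A := fun i =>
  if 0 ≤ i then y i.toNat else x (-i - 1).toNat

/-- The left-infinite sequence `xu` obtained by appending the word `u` on the
right of the left-infinite sequence `x`. -/
def leftAppend {A : Type*} (x : ℕ → A) (u : List A) : ℕ → A := fun n =>
  if h : n < u.length then u.get ⟨u.length - 1 - n, by omega⟩ else x (n - u.length)

/-- `C_X(x) = { y ∈ A^ℕ : x.y ∈ X }`. -/
def followerSet {A : Type*} (X : Set (ℤ → A)) (x : ℕ → A) : Set (ℕ → A) :=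
  {y | combine x y ∈ X}

/-!
An occurrence of `p ++ w ++ q` straddling the junction of `xw.y` is the same thing as an
occurrence of `p ++ q` straddling the junction of `x.y` (`occursAt_combine_leftAppend_iff`).
If `[u] ⊆ [v]` and `xu.y ∈ X`, the windows of radius `n` of `x.y` give contexts `(p, q)` of `u`,
hence of `v`, and the points of `X` containing `p ++ v ++ q` at the right place converge to
`xv.y`, which lies in `X` because `X` is closed. Conversely, a point of `X` containing
`p ++ u ++ q` is, after a shift, of the form `xu.y` with `p` a suffix of `x` and `q` a prefix
of `y`, and then `xv.y ∈ X` contains `p ++ v ++ q`.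
-/

section Occurrences

variable {A : Type*}

def OccursAt (z : ℤ → A) (w : List A) (i : ℤ) : Prop :=
  ∀ k (hk : k < w.length), w[k] = z (i + k)

theorem occursAt_congr {z z' : ℤ → A} {w : List A} {i i' : ℤ}
    (h : ∀ k < w.length, z (i + k) = z' (i' + k)) : OccursAt z w i ↔ OccursAt z' w i' :=
  forall₂_congr fun k hk => by rw [h k hk]

theorem occursAt_append {z : ℤ → A} {p q : List A} {i : ℤ} :
    OccursAt z (p ++ q) i ↔ OccursAt z p i ∧ OccursAt z q (i + p.length) := by
  constructor
  · intro h
    refine ⟨fun k hk => ?_, fun k hk => ?_⟩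
    · have := h k (by simp; omega)
      rwa [List.getElem_append_left hk] at this
    · have := h (p.length + k) (by simp; omega)
      rw [List.getElem_append_right (by omega)] at this
      simpa [add_assoc] using this
  · rintro ⟨hp, hq⟩ k hk
    rw [List.getElem_append]
    split_ifs with hkp
    · exact hp k hkp
    · rw [hq _ (by simp at hk; omega)]
      congr 1
      omega

theorem occursAt_map_range (z : ℤ → A) (i : ℤ) (n : ℕ) :
    OccursAt z ((List.range n).map fun k : ℕ => z (i + k)) i := by
  intro k hk
  simp

theorem OccursAt.eqOn {z z' : ℤ → A} {w : List A} {i : ℤ} (h : OccursAt z w i)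
    (h' : OccursAt z' w i) : Set.EqOn z z' (Set.Ico i (i + w.length)) := by
  rintro j ⟨hij, hj⟩
  obtain ⟨k, rfl⟩ : ∃ k : ℕ, j = i + k := ⟨(j - i).toNat, by omega⟩
  have hk : k < w.length := by omega
  rw [← h k hk, ← h' k hk]

theorem mem_langOf_iff {X : Set (ℤ → A)} {w : List A} :
    w ∈ langOf X ↔ w ≠ [] ∧ ∃ z ∈ X, ∃ i, OccursAt z w i := by
  refine and_congr_right fun _ => exists_congr fun z => and_congr_right fun _ =>
    exists_congr fun i => ?_
  -- the ascription `(k : ℤ)` in `langOf` turns `List.range` into a `List ℤ` by a monadic lift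
  have hcast : (do let a ← List.range w.length; pure (a : ℤ) : List ℤ)
      = (List.range w.length).map (↑) := List.flatMap_pure_eq_map _ _
  rw [hcast, List.map_map]
  constructor
  · intro h k hk
    rw [List.getElem_of_eq h]
    simp
  · intro h
    apply List.ext_getElem
    · simp
    · intro k hk _
      rw [h k hk]
      simp

theorem shift_mem {X : Set (ℤ → A)} (hshift : ∀ z : ℤ → A, z ∈ X ↔ (fun i => z (i + 1)) ∈ X)
    {z : ℤ → A} (hz : z ∈ X) (t : ℤ) : (fun i => z (i + t)) ∈ X := by
  induction t using Int.induction_on with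
  | zero => simpa using hz
  | succ n ih => simpa [add_assoc, add_comm (1 : ℤ)] using (hshift _).1 ih
  | pred n ih =>
    refine (hshift _).2 ?_
    simpa [add_sub_cancel] using ih

theorem mem_langOf_iff_occursAt {X : Set (ℤ → A)}
    (hshift : ∀ z : ℤ → A, z ∈ X ↔ (fun i => z (i + 1)) ∈ X) {w : List A} (i : ℤ) :
    w ∈ langOf X ↔ w ≠ [] ∧ ∃ z ∈ X, OccursAt z w i := by
  rw [mem_langOf_iff]
  refine and_congr_right fun _ => ⟨fun ⟨z, hz, j, hj⟩ => ?_, fun ⟨z, hz, hi⟩ => ⟨z, hz, i, hi⟩⟩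
  refine ⟨_, shift_mem hshift hz (j - i), (occursAt_congr fun k _ => ?_).2 hj⟩
  ring_nf

theorem combine_of_nonneg (x y : ℕ → A) {j : ℤ} (hj : 0 ≤ j) : combine x y j = y j.toNat :=
  if_pos hj

theorem combine_leftAppend_of_lt (x y : ℕ → A) (w : List A) {j : ℤ} (hj : j < -w.length) :
    combine (leftAppend x w) y j = combine x y (j + w.length) := by
  simp only [combine, leftAppend]
  rw [if_neg (by omega), if_neg (by omega), dif_neg (by omega)]
  congr 1
  omega

theorem combine_leftAppend_neg_length_add (x y : ℕ → A) (w : List A) {k : ℕ}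
    (hk : k < w.length) : combine (leftAppend x w) y (-w.length + k) = w[k] := by
  simp only [combine, leftAppend]
  rw [if_neg (by omega), dif_pos (by omega)]
  simp only [List.get_eq_getElem]
  congr 1
  omega

theorem occursAt_combine_leftAppend_iff {x y : ℕ → A} {p w q : List A} :
    OccursAt (combine (leftAppend x w) y) (p ++ w ++ q) (-(p.length + w.length)) ↔
      OccursAt (combine x y) (p ++ q) (-p.length) := by
  have hp : OccursAt (combine (leftAppend x w) y) p (-(p.length + w.length)) ↔
      OccursAt (combine x y) p (-p.length) :=
    occursAt_congr fun k hk => by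
      rw [combine_leftAppend_of_lt _ _ _ (by omega)]
      ring_nf
  have hw : OccursAt (combine (leftAppend x w) y) w (-w.length) := fun k hk =>
    (combine_leftAppend_neg_length_add x y w hk).symm
  have hq : OccursAt (combine (leftAppend x w) y) q 0 ↔ OccursAt (combine x y) q 0 :=
    occursAt_congr fun k _ => by simp only [combine_of_nonneg _ _ (by omega : (0 : ℤ) ≤ 0 + k)]
  have hpos : -((p.length : ℤ) + w.length) + p.length = -w.length := by ring
  simp only [occursAt_append, List.length_append, Nat.cast_add, neg_add_cancel, hpos, hp, hq,
    hw, and_true]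

theorem combine_leftAppend_eq_of_occursAt {z : ℤ → A} {w : List A}
    (h : OccursAt z w (-w.length)) :
    combine (leftAppend (fun n => z (-w.length - 1 - n)) w) (fun n => z n) = z := by
  funext j
  rcases lt_or_ge j (-w.length) with hj | hj
  · rw [combine_leftAppend_of_lt _ _ _ hj, combine, if_neg (by omega)]
    congr 1
    omega
  rcases lt_or_ge j 0 with hj' | hj'
  · obtain ⟨k, rfl⟩ : ∃ k : ℕ, j = -w.length + k := ⟨(j + w.length).toNat, by omega⟩
    rw [combine_leftAppend_neg_length_add _ _ _ (by omega), h]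
  · rw [combine_of_nonneg _ _ hj']
    congr 1
    omega

end Occurrences

theorem stmt10_general {A : Type*} (X : Set (ℤ → A))
    (hshift : ∀ z : ℤ → A, z ∈ X ↔ (fun i => z (i + 1)) ∈ X)
    (hclosed : ∀ z : ℤ → A,
      (∀ n : ℕ, ∃ z' ∈ X, ∀ i : ℤ, |i| ≤ (n : ℤ) → z' i = z i) → z ∈ X)
    (u v : List A) (hv : v ≠ []) :
    (∀ p q : List A, p ++ u ++ q ∈ langOf X → p ++ v ++ q ∈ langOf X) ↔
      ∀ x : ℕ → A, followerSet X (leftAppend x u) ⊆ followerSet X (leftAppend x v) := by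
  constructor
  · intro h x y hy
    refine hclosed _ fun n => ?_
    set p := (List.range n).map fun k : ℕ => combine x y (-n + k)
    set q := (List.range (n + 1)).map fun k : ℕ => combine x y k
    have hpn : p.length = n := by simp [p]
    have hpq : OccursAt (combine x y) (p ++ q) (-p.length) := by
      refine occursAt_append.2 ⟨?_, ?_⟩
      · simpa [hpn] using occursAt_map_range (combine x y) (-n) n
      · simpa [hpn] using occursAt_map_range (combine x y) 0 (n + 1)
    have hpuq : p ++ u ++ q ∈ langOf X :=
      mem_langOf_iff.2 ⟨by simp [q], _, hy, _, occursAt_combine_leftAppend_iff.2 hpq⟩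
    obtain ⟨-, z, hz, hz_occ⟩ :=
      (mem_langOf_iff_occursAt hshift (-(p.length + v.length))).1 (h p q hpuq)
    refine ⟨z, hz, fun j hj => hz_occ.eqOn (occursAt_combine_leftAppend_iff.2 hpq) ?_⟩
    simp only [abs_le] at hj
    simp only [Set.mem_Ico, List.length_append, hpn, q, List.length_map, List.length_range]
    omega
  · intro h p q hpuq
    obtain ⟨-, z, hz, hz_occ⟩ := (mem_langOf_iff_occursAt hshift (-(p.length + u.length))).1 hpuq
    have hu_occ : OccursAt z u (-u.length) := by
      have := (occursAt_append.1 (occursAt_append.1 hz_occ).1).2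
      rwa [show -((p.length : ℤ) + u.length) + p.length = -u.length by ring] at this
    rw [← combine_leftAppend_eq_of_occursAt hu_occ, occursAt_combine_leftAppend_iff] at hz_occ
    rw [← combine_leftAppend_eq_of_occursAt hu_occ] at hz
    exact mem_langOf_iff.2 ⟨by simp [hv], _, h _ hz, _, occursAt_combine_leftAppend_iff.2 hz_occ⟩

/-- For a shift `X ⊆ A^ℤ` over a finite alphabet and words `u, v`:
`[u] ⊆ [v]` (inclusion of two-sided contexts) iff `C_X(xu) ⊆ C_X(xv)` for
every left-infinite `x`. -/
theorem stmt10 {A : Type*} [Fintype A] (X : Set (ℤ → A)) (hne : X.Nonempty)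
    (hshift : ∀ z : ℤ → A, z ∈ X ↔ (fun i => z (i + 1)) ∈ X)
    (hclosed : ∀ z : ℤ → A,
      (∀ n : ℕ, ∃ z' ∈ X, ∀ i : ℤ, |i| ≤ (n : ℤ) → z' i = z i) → z ∈ X)
    (u v : List A) (hu : u ≠ []) (hv : v ≠ []) :
    (∀ p q : List A, p ++ u ++ q ∈ langOf X → p ++ v ++ q ∈ langOf X) ↔
      ∀ x : ℕ → A, followerSet X (leftAppend x u) ⊆ followerSet X (leftAppend x v) :=
  stmt10_general X hshift hclosed u v hv
end

section
/- If G and H are directed graphs whose free categories G* and H* are equivalent as categories, then G and H are isomorphic as graphs. -/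
/-!
Isomorphisms in a free category have length zero, so they are identities and an equivalence
`Paths G ≌ Paths H` is an isomorphism of categories. Neither functor can send an edge to an
identity (the composite would then send that edge to an identity), so neither shortens a path,
while their composites preserve length. Hence both functors send edges to edges, and their
restrictions to edges are mutually inverse prefunctors.
-/

open CategoryTheory

namespace CategoryTheory.Paths

variable {V W : Type*} [Quiver V] [Quiver W]

lemma length_comp {a b c : Paths V} (f : a ⟶ b) (g : b ⟶ c) :
    (f ≫ g).length = f.length + g.length :=
  Quiver.Path.length_comp f g

lemma length_eqToHom {a b : Paths V} (h : a = b) : (eqToHom h : a ⟶ b).length = 0 := by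
  subst h; rfl

lemma eq_eqToHom_of_length_eq_zero {a b : Paths V} (p : a ⟶ b) (hp : p.length = 0) :
    ∃ h : a = b, p = eqToHom h := by
  obtain rfl := Quiver.Path.eq_of_length_zero p hp
  exact ⟨rfl, Quiver.Path.eq_nil_of_length_zero p hp⟩

lemma length_map_eq_zero (F : Paths V ⥤ Paths W) {a b : Paths V} (p : a ⟶ b)
    (hp : p.length = 0) : (F.map p).length = 0 := by
  obtain ⟨rfl, rfl⟩ := eq_eqToHom_of_length_eq_zero p hp
  rw [eqToHom_refl, F.map_id]
  rfl

lemma length_iso_hom {a b : Paths V} (i : a ≅ b) : i.hom.length = 0 := by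
  have h := congrArg Quiver.Path.length i.hom_inv_id
  rw [length_comp] at h
  change _ = 0 at h
  omega

lemma functor_eq_id_of_iso {Φ : Paths V ⥤ Paths V} (η : Φ ≅ 𝟭 (Paths V)) : Φ = 𝟭 (Paths V) :=
  have hobj : ∀ a, Φ.obj a = a := fun a =>
    (eq_eqToHom_of_length_eq_zero _ (length_iso_hom (η.app a))).1
  Functor.ext_of_iso η hobj fun a =>
    (eq_eqToHom_of_length_eq_zero _ (length_iso_hom (η.app a))).2

section LeftInverse

variable {F : Paths V ⥤ Paths W} {K : Paths W ⥤ Paths V}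

lemma length_map_map_of_comp_eq_id (h : F ⋙ K = 𝟭 (Paths V)) {a b : Paths V} (p : a ⟶ b) :
    (K.map (F.map p)).length = p.length := by
  have hp : (F ⋙ K).map p = _ := Functor.congr_hom h p
  rw [Functor.comp_map] at hp
  rw [hp, length_comp, length_comp, length_eqToHom, length_eqToHom, Functor.id_map]
  omega

lemma length_map_toPath_pos (h : F ⋙ K = 𝟭 (Paths V)) {a b : V} (q : a ⟶ b) :
    0 < (F.map q.toPath).length := by
  by_contra! hq
  have := length_map_eq_zero K _ (Nat.le_zero.mp hq)
  rw [length_map_map_of_comp_eq_id h q.toPath] at this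
  exact one_ne_zero this

end LeftInverse

lemma length_le_length_map {F : Paths V ⥤ Paths W}
    (hF : ∀ {a b : V} (q : a ⟶ b), 0 < (F.map q.toPath).length) {a b : Paths V} (p : a ⟶ b) :
    p.length ≤ (F.map p).length := by
  induction p using Paths.induction with
  | id => exact Nat.zero_le _
  | comp p q ih =>
    rw [F.map_comp, length_comp, length_comp]
    exact Nat.add_le_add ih (hF q)

lemma length_map_toPath_eq_one {F : Paths V ⥤ Paths W} {K : Paths W ⥤ Paths V}
    (hFK : F ⋙ K = 𝟭 (Paths V)) (hKF : K ⋙ F = 𝟭 (Paths W)) {a b : V} (q : a ⟶ b) :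
    (F.map q.toPath).length = 1 := by
  have h₁ := length_le_length_map (length_map_toPath_pos hKF) (F.map q.toPath)
  have h₂ := length_map_toPath_pos hFK q
  rw [length_map_map_of_comp_eq_id hFK q.toPath] at h₁
  exact le_antisymm h₁ h₂

lemma exists_eq_toPath_of_length_eq_one {a b : V} (p : Quiver.Path a b) (hp : p.length = 1) :
    ∃ q : a ⟶ b, p = q.toPath := by
  obtain ⟨c, q, p', hq, rfl⟩ := p.eq_toPath_comp_of_length_eq_succ hp
  obtain rfl := Quiver.Path.eq_of_length_zero p' hq
  obtain rfl := Quiver.Path.eq_nil_of_length_zero p' hq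
  exact ⟨q, rfl⟩

lemma prefunctor_ext_of_comp_of {Φ Ψ : V ⥤q W} (h : Φ ⋙q of W = Ψ ⋙q of W) : Φ = Ψ := by
  obtain ⟨Φobj, Φmap⟩ := Φ
  obtain ⟨Ψobj, Ψmap⟩ := Ψ
  obtain ⟨hobj, hmap⟩ := Prefunctor.mk.inj h
  obtain rfl : Φobj = Ψobj := hobj
  congr
  funext a b q
  exact eq_of_heq <| Quiver.Path.hom_heq_of_cons_eq_cons <|
    congrArg (fun m => @m a b q) (eq_of_heq hmap)

noncomputable def restrictEdges (F : Paths V ⥤ Paths W)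
    (hF : ∀ {a b : V} (q : a ⟶ b), (F.map q.toPath).length = 1) : V ⥤q W where
  obj := F.obj
  map q := (exists_eq_toPath_of_length_eq_one _ (hF q)).choose

lemma restrictEdges_comp_of (F : Paths V ⥤ Paths W)
    (hF : ∀ {a b : V} (q : a ⟶ b), (F.map q.toPath).length = 1) :
    restrictEdges F hF ⋙q of W = of V ⋙q F.toPrefunctor :=
  Prefunctor.ext (fun _ => rfl) fun _ _ q =>
    (exists_eq_toPath_of_length_eq_one _ (hF q)).choose_spec.symm

lemma restrictEdges_comp_restrictEdges {F : Paths V ⥤ Paths W} {K : Paths W ⥤ Paths V}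
    (hF : ∀ {a b : V} (q : a ⟶ b), (F.map q.toPath).length = 1)
    (hK : ∀ {a b : W} (q : a ⟶ b), (K.map q.toPath).length = 1) (h : F ⋙ K = 𝟭 (Paths V)) :
    restrictEdges F hF ⋙q restrictEdges K hK = 𝟭q V :=
  prefunctor_ext_of_comp_of <| calc
    (restrictEdges F hF ⋙q restrictEdges K hK) ⋙q of V
        = restrictEdges F hF ⋙q (of W ⋙q K.toPrefunctor) := by
          rw [Prefunctor.comp_assoc, restrictEdges_comp_of]
    _ = (of V ⋙q F.toPrefunctor) ⋙q K.toPrefunctor := by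
          rw [← Prefunctor.comp_assoc, restrictEdges_comp_of]
    _ = of V ⋙q (F ⋙ K).toPrefunctor := Prefunctor.comp_assoc _ _ _
    _ = 𝟭q V ⋙q of V := by rw [h]; rfl

end CategoryTheory.Paths

/-- If the free categories on two quivers `G` and `H` are equivalent, then `G`
and `H` are isomorphic as quivers. -/
theorem stmt15 {G H : Type*} [Quiver G] [Quiver H]
    (e : Paths G ≌ Paths H) :
    ∃ (F : Prefunctor G H) (K : Prefunctor H G),
      F.comp K = Prefunctor.id G ∧ K.comp F = Prefunctor.id H := by
  have hFK := Paths.functor_eq_id_of_iso e.unitIso.symm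
  have hKF := Paths.functor_eq_id_of_iso e.counitIso
  have hF : ∀ {a b : G} (q : a ⟶ b), (e.functor.map q.toPath).length = 1 :=
    Paths.length_map_toPath_eq_one hFK hKF
  have hK : ∀ {a b : H} (q : a ⟶ b), (e.inverse.map q.toPath).length = 1 :=
    Paths.length_map_toPath_eq_one hKF hFK
  exact ⟨Paths.restrictEdges _ hF, Paths.restrictEdges _ hK,
    Paths.restrictEdges_comp_restrictEdges hF hK hFK,
    Paths.restrictEdges_comp_restrictEdges hK hF hKF⟩
end

section
/- Let S be a semigroup and K(S) its Karoubi envelope. A morphism (e, s, f) of K(S) is a split monomorphism (admits a left inverse) if and only if s L f in Green's L-relation, i.e., S¹s = S¹f. -/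
open CategoryTheory

theorem isSplitMono_iff_exists_mul_eq {S : Type*} [Semigroup S] {f e : KIdem S} (m : f ⟶ e) :
    IsSplitMono m ↔ ∃ t : S, t * m.1 = f.1 := by
  constructor
  · rintro ⟨⟨r, hr⟩⟩
    exact ⟨r.1, congrArg Subtype.val hr⟩
  · rintro ⟨t, ht⟩
    -- Sandwiching `t` between the idempotents puts it in `fSe` without changing `t * m.1`.
    refine ⟨⟨⟨f.1 * t * e.1, ?_⟩, Subtype.ext ?_⟩⟩
    · show f.1 * (f.1 * t * e.1) * e.1 = f.1 * t * e.1
      rw [← mul_assoc, ← mul_assoc, f.2, mul_assoc _ e.1, e.2]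
    · show f.1 * t * e.1 * m.1 = f.1
      rw [mul_assoc, left_absorb e.2 m.2, mul_assoc, ht, f.2]

theorem greenL_iff_exists_mul_eq {S : Type*} [Semigroup S] {a b : S} (hab : a * b = a) :
    GreenL a b ↔ ∃ x, x * a = b := by
  constructor
  · rintro ⟨hba | ⟨x, rfl⟩, -⟩
    · exact ⟨a, hba ▸ hab⟩
    · exact ⟨x, rfl⟩
  · rintro ⟨x, rfl⟩
    exact ⟨Or.inr ⟨x, rfl⟩, Or.inr ⟨a, hab.symm⟩⟩

/-- A morphism `(e, s, f) : f ⟶ e` of the Karoubi envelope `K(S)` is a split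
monomorphism iff `s L f` in Green's `L`-relation. -/
theorem stmt17 {S : Type*} [Semigroup S] (f e : KIdem S) (m : f ⟶ e) :
    IsSplitMono m ↔ GreenL m.1 f.1 := by
  rw [isSplitMono_iff_exists_mul_eq, greenL_iff_exists_mul_eq (right_absorb f.2 m.2)]
end

section
/- Let X ⊆ A^ℤ be a shift, X' ⊆ B^ℤ its symbol expansion relative to a letter α (B = A ∪ {◊}), and E : A* → B* the symbol expansion monoid homomorphism (E(α) = α◊, E(a) = a otherwise). Then for u, v ∈ A⁺: [u]_X ⊆ [v]_X if and only if [E(u)]_{X'} ⊆ [E(v)]_{X'}; consequently the map [u]_X ↦ [E(u)]_{X'}, 0 ↦ 0, is a well-defined injective semigroup homomorphism S(X) → S(X'). -/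
/-- The symbol expansion homomorphism associated to the letter `α`:
`α ↦ α◊` and `a ↦ a` otherwise (the new symbol `◊` is `Sum.inr ()`). -/
def expand {A : Type*} [DecidableEq A] (α : A) (u : List A) : List (A ⊕ Unit) :=
  u.flatMap fun a => if a = α then [Sum.inl a, Sum.inr ()] else [Sum.inl a]

/-- The two-sided context of a word in a language. -/
def ctxIn {B : Type*} (L : Set (List B)) (u : List B) : Set (List B × List B) :=
  {pq | pq.1 ++ u ++ pq.2 ∈ L}

/-- The language of the symbol expansion `X'` of the shift with language `L`:
nonempty factors of expansions of words of `L`. -/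
def expandedLang {A : Type*} [DecidableEq A] (α : A) (L : Set (List A)) :
    Set (List (A ⊕ Unit)) :=
  {w | w ≠ [] ∧ ∃ u ∈ L, w <:+: expand α u}

section
variable {A : Type*} [DecidableEq A]


lemma expand_cons (α a : A) (u : List A) :
    expand α (a :: u) =
      (if a = α then [Sum.inl a, Sum.inr ()] else [Sum.inl a]) ++ expand α u := by
  simp [expand]

lemma expand_append (α : A) (u v : List A) :
    expand α (u ++ v) = expand α u ++ expand α v := by
  simp [expand]

lemma expand_eq_nil_iff (α : A) (u : List A) : expand α u = [] ↔ u = [] := by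
  cases u with
  | nil => simp [expand]
  | cons a t => rw [expand_cons]; split <;> simp

lemma factor_expand (α : A) :
    ∀ (w : List A) (X Y : List (A ⊕ Unit)) (u : List A), u ≠ [] →
    expand α w = X ++ expand α u ++ Y →
    ∃ p q, X = expand α p ∧ Y = expand α q ∧ w = p ++ u ++ q := by
  intro w
  induction w with
  | nil =>
    intro X Y u hu h
    simp only [expand, List.flatMap_nil] at h
    have : expand α u = [] := by
      rcases List.append_eq_nil_iff.mp h.symm with ⟨h1, h2⟩
      rcases List.append_eq_nil_iff.mp h1 with ⟨_, h3⟩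
      exact h3
    exact absurd ((expand_eq_nil_iff α u).mp this) hu
  | cons a w ih =>
    intro X Y u hu h
    rw [expand_cons] at h
    by_cases ha : a = α
    · rw [if_pos ha] at h
      match X with
      | [] =>
        simp only [List.nil_append] at h
        obtain ⟨b, u', rfl⟩ := List.exists_cons_of_ne_nil hu
        rw [expand_cons] at h
        by_cases hb : b = α
        · rw [if_pos hb] at h
          subst hb
          simp only [List.cons_append, List.cons.injEq, Sum.inl.injEq] at h
          obtain ⟨rfl, -, h⟩ := h
          by_cases hu' : u' = []
          · subst hu'
            exact ⟨[], w, by simp [expand], by simpa [expand] using h.symm, by simp⟩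
          · obtain ⟨p, q, hp, hq, hw⟩ := ih [] Y u' hu' (by simpa using h)
            have : p = [] := (expand_eq_nil_iff _ p).mp hp.symm
            subst this
            exact ⟨[], q, by simp [expand], hq, by simp [hw]⟩
        · rw [if_neg hb] at h
          simp only [List.cons_append, List.cons.injEq, Sum.inl.injEq] at h
          exact absurd (h.1.symm.trans ha) hb
      | [x] =>
        simp only [List.cons_append, List.nil_append, List.cons.injEq] at h
        obtain ⟨-, h⟩ := h
        obtain ⟨c, u', rfl⟩ := List.exists_cons_of_ne_nil hu
        rw [expand_cons] at h
        by_cases hc : c = α <;> simp [hc] at h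
      | x :: y :: X' =>
        simp only [List.cons_append, List.cons.injEq] at h
        obtain ⟨hx, hy, h⟩ := h
        obtain ⟨p, q, hp, hq, hw⟩ := ih X' Y u hu h
        subst ha
        exact ⟨a :: p, q, by rw [expand_cons, if_pos rfl]; simp [hx, hy, hp], hq,
          by simp [hw]⟩
    · rw [if_neg ha] at h
      match X with
      | [] =>
        simp only [List.nil_append, List.singleton_append] at h
        obtain ⟨b, u', rfl⟩ := List.exists_cons_of_ne_nil hu
        rw [expand_cons] at h
        by_cases hb : b = α
        · rw [if_pos hb] at h
          simp only [List.cons_append, List.cons.injEq, Sum.inl.injEq] at h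
          exact absurd (h.1.trans hb) ha
        · rw [if_neg hb] at h
          simp only [List.cons_append, List.singleton_append, List.cons.injEq,
            Sum.inl.injEq] at h
          obtain ⟨rfl, h⟩ := h
          by_cases hu' : u' = []
          · subst hu'
            exact ⟨[], w, by simp [expand], by simpa [expand] using h.symm, by simp⟩
          · obtain ⟨p, q, hp, hq, hw⟩ := ih [] Y u' hu' (by simpa using h)
            have : p = [] := (expand_eq_nil_iff _ p).mp hp.symm
            subst this
            exact ⟨[], q, by simp [expand], hq, by simp [hw]⟩
      | x :: X' =>
        simp only [List.cons_append, List.singleton_append, List.cons.injEq] at h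
        obtain ⟨hx, h⟩ := h
        obtain ⟨p, q, hp, hq, hw⟩ := ih X' Y u hu h
        exact ⟨a :: p, q, by rw [expand_cons, if_neg ha]; simp [hx, hp], hq, by simp [hw]⟩


lemma mem_expandedLang (α : A) (L : Set (List A)) {p u q : List A} (hu : u ≠ [])
    (h : p ++ u ++ q ∈ L) :
    expand α p ++ expand α u ++ expand α q ∈ expandedLang α L := by
  refine ⟨?_, p ++ u ++ q, h, ?_⟩
  · simp [expand_eq_nil_iff, hu]
  · rw [← expand_append, ← expand_append]

lemma ctx_mp (α : A) (L : Set (List A)) {u v : List A} (hu : u ≠ []) (hv : v ≠ [])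
    (hsub : ctxIn L u ⊆ ctxIn L v) :
    ctxIn (expandedLang α L) (expand α u) ⊆ ctxIn (expandedLang α L) (expand α v) := by
  rintro ⟨P, Q⟩ ⟨-, w, hwL, s, t, hst⟩
  have hst' : expand α w = (s ++ P) ++ expand α u ++ (Q ++ t) := by
    rw [← hst]; simp
  obtain ⟨p, q, hp, hq, rfl⟩ := factor_expand α w (s ++ P) (Q ++ t) u hu hst'
  have hpv : p ++ v ++ q ∈ L := hsub (a := (p, q)) hwL
  refine ⟨?_, p ++ v ++ q, hpv, s, t, ?_⟩
  · simp [expand_eq_nil_iff, hv]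
  · rw [expand_append, expand_append, ← hp, ← hq]
    simp

lemma ctx_mpr (α : A) (L : Set (List A)) {u v : List A} (hu : u ≠ []) (hv : v ≠ [])
    (hfac : ∀ u v : List A, u ∈ L → v ≠ [] → v <:+: u → v ∈ L)
    (hsub : ctxIn (expandedLang α L) (expand α u) ⊆ ctxIn (expandedLang α L) (expand α v)) :
    ctxIn L u ⊆ ctxIn L v := by
  rintro ⟨p, q⟩ hpq
  have h1 : (expand α p, expand α q) ∈ ctxIn (expandedLang α L) (expand α u) :=
    mem_expandedLang α L hu hpq
  obtain ⟨-, w, hwL, s, t, hst⟩ := hsub h1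
  have hst' : expand α w = s ++ expand α (p ++ v ++ q) ++ t := by
    rw [← hst, expand_append, expand_append]
  have hpvq : p ++ v ++ q ≠ [] := by simp [hv]
  obtain ⟨p', q', -, -, rfl⟩ :=
    factor_expand α w s t (p ++ v ++ q) hpvq hst'
  exact hfac _ _ hwL hpvq ⟨p', q', rfl⟩

end


/-- For the symbol expansion `X'` of a shift `X` relative to a letter `α`:
`[u]_X ⊆ [v]_X` iff `[E(u)]_{X'} ⊆ [E(v)]_{X'}`; consequently
`[u]_X ↦ [E(u)]_{X'}` is a well-defined injective semigroup homomorphism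
`S(X) → S(X')` (well-definedness and injectivity are the equality version, and
the homomorphism property holds since `E(uv) = E(u)E(v)`). -/

theorem stmt18 {A : Type*} [DecidableEq A] (α : A) (L : Set (List A))
    (hnil : ([] : List A) ∉ L)
    (hfac : ∀ u v : List A, u ∈ L → v ≠ [] → v <:+: u → v ∈ L)
    (hpro : ∀ u ∈ L, ∃ a b : A, (a :: u) ∈ L ∧ u ++ [b] ∈ L)
    (u v : List A) (hu : u ≠ []) (hv : v ≠ []) :
    (ctxIn L u ⊆ ctxIn L v ↔
        ctxIn (expandedLang α L) (expand α u) ⊆ ctxIn (expandedLang α L) (expand α v)) ∧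
    (ctxIn L u = ctxIn L v ↔
        ctxIn (expandedLang α L) (expand α u) = ctxIn (expandedLang α L) (expand α v)) ∧
    expand α (u ++ v) = expand α u ++ expand α v := by
  refine ⟨⟨fun h => ctx_mp α L hu hv h, fun h => ctx_mpr α L hu hv hfac h⟩, ?_, expand_append α u v⟩
  constructor
  · intro h
    exact Set.Subset.antisymm (ctx_mp α L hu hv h.subset) (ctx_mp α L hv hu h.symm.subset)
  · intro h
    exact Set.Subset.antisymm (ctx_mpr α L hu hv hfac h.subset)
      (ctx_mpr α L hv hu hfac h.symm.subset)
end
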